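/- Let I_s > 0, V_T > 0, R > 0 and let v(j) = R·i(j) with i(j) = j + I_s − (V_T/R)·W₀((I_s·R/V_T)·exp((R/V_T)·(j + I_s))). Then v(j)/ (V_T·ln(j/I_s)) → 1 as j → ∞; equivalently, v(j) = V_T·ln(j/I_s) + o(ln j) grows logarithmically in j. -/
import Mathlib


/-- Principal branch of the Lambert W function on `[0, ∞)`:
for `x ≥ 0`, `W0 x` is the unique `y ≥ 0` with `y * exp y = x`. -/
noncomputable def W0 (x : ℝ) : ℝ :=
  Function.invFunOn (fun y : ℝ => y * Real.exp y) (Set.Ici 0) x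

open Real Filter

lemma W0_exists (x : ℝ) (hx : 0 ≤ x) : ∃ y ∈ Set.Ici (0:ℝ), y * Real.exp y = x := by
  have hc : ContinuousOn (fun y : ℝ => y * Real.exp y) (Set.Icc 0 x) :=
    (continuous_id.mul Real.continuous_exp).continuousOn
  have hmem : x ∈ Set.Icc ((fun y : ℝ => y * Real.exp y) 0) ((fun y : ℝ => y * Real.exp y) x) := by
    simp only
    constructor
    · simpa using hx
    · nlinarith [Real.one_le_exp hx]
  obtain ⟨y, hy, hyx⟩ := intermediate_value_Icc hx hc hmem
  exact ⟨y, hy.1, hyx⟩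

lemma W0_spec (x : ℝ) (hx : 0 ≤ x) :
    0 ≤ W0 x ∧ W0 x * Real.exp (W0 x) = x := by
  have h := W0_exists x hx
  exact ⟨Function.invFunOn_mem h, Function.invFunOn_eq h⟩

theorem eh_voltage_log_growth
    (Is VT R : ℝ) (hIs : 0 < Is) (hVT : 0 < VT) (hR : 0 < R) :
    Filter.Tendsto
      (fun j : ℝ =>
        (R * (j + Is - (VT / R) * W0 ((Is * R / VT) * Real.exp ((R / VT) * (j + Is))))) /
          (VT * Real.log (j / Is)))
      Filter.atTop (nhds 1) := by
  set a : ℝ := R / VT with ha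
  have ha0 : 0 < a := div_pos hR hVT
  set C : ℝ := Real.log (Is * R / VT) with hC
  set x : ℝ → ℝ := fun j => (Is * R / VT) * Real.exp ((R / VT) * (j + Is)) with hxdef
  have hxpos : ∀ j, 0 < x j := fun j =>
    mul_pos (div_pos (mul_pos hIs hR) hVT) (Real.exp_pos _)
  set w : ℝ → ℝ := fun j => W0 (x j) with hwdef
  have hspec : ∀ j, 0 ≤ w j ∧ w j * Real.exp (w j) = x j := fun j => W0_spec _ (hxpos j).le
  have hwpos : ∀ j, 0 < w j := by
    intro j
    rcases (hspec j).1.lt_or_eq with h | h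
    · exact h
    · exfalso
      have h2 := (hspec j).2
      rw [← h] at h2
      simp at h2
      exact (hxpos j).ne' h2.symm
  -- the key identity
  have key : ∀ j, Real.log (w j) + w j = C + a * (j + Is) := by
    intro j
    have h2 := congrArg Real.log (hspec j).2
    rw [Real.log_mul (hwpos j).ne' (Real.exp_pos _).ne', Real.log_exp] at h2
    rw [h2, hxdef]
    rw [Real.log_mul (by positivity) (Real.exp_pos _).ne', Real.log_exp]
  -- u j is the linear upper bound
  set u : ℝ → ℝ := fun j => C + a * (j + Is) with hu
  have hu_top : Tendsto u atTop atTop := by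
    have : Tendsto (fun j : ℝ => a * (j + Is)) atTop atTop :=
      (tendsto_atTop_add_const_right atTop Is tendsto_id).const_mul_atTop ha0
    exact tendsto_atTop_add_const_left atTop C this
  -- lower bound for w : u j / 2 ≤ w j
  have hlow : ∀ j, u j / 2 ≤ w j := by
    intro j
    have h1 := key j
    have h2 := Real.log_le_sub_one_of_pos (hwpos j)
    simp only [hu]
    linarith
  have hw_top : Tendsto w atTop atTop :=
    tendsto_atTop_mono hlow (hu_top.atTop_div_const (by norm_num))
  -- eventually log (w j) ≥ 0, hence w j ≤ u j
  have hwev : ∀ᶠ j in atTop, 1 ≤ w j := hw_top.eventually_ge_atTop 1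
  have hupper : ∀ᶠ j in atTop, w j ≤ u j := by
    filter_upwards [hwev] with j hj
    have h1 := key j
    have h2 : 0 ≤ Real.log (w j) := Real.log_nonneg hj
    simp only [hu]
    linarith
  -- u j / j → a
  have huj : Tendsto (fun j => u j / j) atTop (nhds a) := by
    have h1 : Tendsto (fun j : ℝ => a + (C + a * Is) / j) atTop (nhds a) := by
      have := (tendsto_const_nhds (x := C + a * Is) (f := atTop (α := ℝ))).div_atTop (tendsto_id (α := ℝ))
      simpa using tendsto_const_nhds.add this
    refine h1.congr' ?_
    filter_upwards [eventually_gt_atTop 0] with j hj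
    field_simp [hu]
    ring
  -- log (u j) / j → 0
  have hlogu : Tendsto (fun j => Real.log (u j) / j) atTop (nhds 0) := by
    have h1 : Tendsto (fun j => Real.log (u j) / u j) atTop (nhds 0) :=
      (Real.isLittleO_log_id_atTop.tendsto_div_nhds_zero).comp hu_top
    have h2 : Tendsto (fun j => Real.log (u j) / u j * (u j / j)) atTop (nhds (0 * a)) :=
      h1.mul huj
    rw [zero_mul] at h2
    refine h2.congr' ?_
    filter_upwards [hu_top.eventually_gt_atTop 0, eventually_gt_atTop 0] with j hj hj0
    field_simp
  -- log (w j) / j → 0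
  have hlogw : Tendsto (fun j => Real.log (w j) / j) atTop (nhds 0) := by
    refine tendsto_of_tendsto_of_tendsto_of_le_of_le' tendsto_const_nhds hlogu ?_ ?_
    · filter_upwards [hwev, eventually_gt_atTop 0] with j hj hj0
      exact div_nonneg (Real.log_nonneg hj) hj0.le
    · filter_upwards [hupper, eventually_gt_atTop 0] with j hj hj0
      gcongr
      exacts [hwpos j]
  -- w j / j → a
  have hwj : Tendsto (fun j => w j / j) atTop (nhds a) := by
    have h1 : Tendsto (fun j => u j / j - Real.log (w j) / j) atTop (nhds (a - 0)) :=
      huj.sub hlogw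
    rw [sub_zero] at h1
    refine h1.congr ?_
    intro j
    have := key j
    have : w j = u j - Real.log (w j) := by simp only [hu]; linarith
    rw [← sub_div, ← this]
  -- log (w j) - log j → log a
  have hd : Tendsto (fun j => Real.log (w j) - Real.log j) atTop (nhds (Real.log a)) := by
    have h1 : Tendsto (fun j => Real.log (w j / j)) atTop (nhds (Real.log a)) :=
      (Real.continuousAt_log ha0.ne').tendsto.comp hwj
    refine h1.congr' ?_
    filter_upwards [eventually_gt_atTop 0] with j hj
    rw [Real.log_div (hwpos j).ne' hj.ne']
  -- the final limit for (log (w j) - C) / (log j - log Is)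
  have hfin : Tendsto (fun j => (Real.log (w j) - C) / (Real.log j - Real.log Is))
      atTop (nhds 1) := by
    have hlj : Tendsto (fun j : ℝ => Real.log j - Real.log Is) atTop atTop :=
      tendsto_atTop_add_const_right atTop _ Real.tendsto_log_atTop
    have h2 : Tendsto
        (fun j => (Real.log (w j) - Real.log j - C + Real.log Is) / (Real.log j - Real.log Is))
        atTop (nhds 0) := by
      have hnum : Tendsto (fun j => Real.log (w j) - Real.log j - C + Real.log Is)
          atTop (nhds (Real.log a - C + Real.log Is)) := by
        exact Tendsto.add (hd.sub_const C) tendsto_const_nhds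
      exact hnum.div_atTop hlj
    have h3 : Tendsto
        (fun j => 1 + (Real.log (w j) - Real.log j - C + Real.log Is) / (Real.log j - Real.log Is))
        atTop (nhds (1 + 0)) := tendsto_const_nhds.add h2
    rw [add_zero] at h3
    refine h3.congr' ?_
    filter_upwards [hlj.eventually_gt_atTop 0] with j hj
    have hne : Real.log j - Real.log Is ≠ 0 := hj.ne'
    field_simp
    ring
  -- rewrite the original expression
  refine hfin.congr' ?_
  filter_upwards [eventually_gt_atTop 0] with j hj
  have h1 : Real.log (j / Is) = Real.log j - Real.log Is := Real.log_div hj.ne' hIs.ne'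
  have h2 : Real.log (w j) - C = a * (j + Is) - w j := by linarith [key j]
  have h3 : R * (j + Is - (VT / R) * w j) = VT * (Real.log (w j) - C) := by
    rw [h2, ha]
    field_simp
  show (Real.log (w j) - C) / (Real.log j - Real.log Is) = _
  rw [h3, h1, mul_div_mul_left _ _ hVT.ne']
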